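/- Let n ≥ 1 and let ψ : ℝ → ℂ be n-times differentiable on ℝ∖{0}. Define the clock Hamiltonian action (Ĥ_Cψ)(p) := s·p²·ψ(p)/2. Then for every p ≠ 0: (T̂ⁿ(Ĥ_Cψ))(p) − (Ĥ_C(T̂ⁿψ))(p) = i·n·(T̂^{n−1}ψ)(p). In particular, for n = 1 the covariant time operator is canonically conjugate to the quadratic clock Hamiltonian: (T̂(Ĥ_Cψ))(p) − (Ĥ_C(T̂ψ))(p) = i·ψ(p), i.e., [T̂, Ĥ_C] = i. -/

import Mathlib

/-- The covariant time operator `(T̂ψ)(p) = i·s·(ψ′(p)/p − ψ(p)/(2p²))` in momentum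
representation (symmetric ordering `(s/2)(t̂ p̂⁻¹ + p̂⁻¹ t̂)`). -/
noncomputable def timeOp (s : ℝ) (ψ : ℝ → ℂ) (p : ℝ) : ℂ :=
  Complex.I * (s : ℂ) * (deriv ψ p / (p : ℂ) - ψ p / (2 * (p : ℂ) ^ 2))

/-- The quadratic clock Hamiltonian `(Ĥ_Cψ)(p) = s·p²·ψ(p)/2` in momentum
representation. -/
noncomputable def clockHam (s : ℝ) (ψ : ℝ → ℂ) (p : ℝ) : ℂ :=
  (s : ℂ) * (p : ℂ) ^ 2 * ψ p / 2

/-!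
At `p ≠ 0` the product rule gives `T̂(Ĥ_Cψ) = i s² (3ψ/4 + pψ′/2)` and `Ĥ_C(T̂ψ) = i s² (pψ′/2 − ψ/4)`,
so `[T̂, Ĥ_C] = i s²`. Then `[T̂ⁿ⁺¹, Ĥ_C] = T̂[T̂ⁿ, Ĥ_C] + [T̂, Ĥ_C]T̂ⁿ` gives `[T̂ⁿ, Ĥ_C] = i s² n T̂ⁿ⁻¹`
by induction. As `T̂` at `p` depends on its argument near `p` only, each step may use the inductive
hypothesis on `ℝ∖{0}`; the linearity of `T̂` needs `T̂ᵏψ` differentiable there, hence `ψ ∈ Cⁿ`.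
-/

section

variable {s : ℝ} {f g ψ : ℝ → ℂ} {p : ℝ}

lemma timeOp_congr_of_eventuallyEq (h : f =ᶠ[nhds p] g) : timeOp s f p = timeOp s g p := by
  simp only [timeOp, h.deriv_eq, h.eq_of_nhds]

lemma timeOp_add_const_mul (c : ℂ) (hf : DifferentiableAt ℝ f p)
    (hg : DifferentiableAt ℝ g p) :
    timeOp s (fun q => f q + c * g q) p = timeOp s f p + c * timeOp s g p := by
  simp only [timeOp, deriv_fun_add hf (hg.const_mul c), deriv_const_mul c hg]
  ring

lemma differentiableAt_clockHam (hψ : DifferentiableAt ℝ ψ p) :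
    DifferentiableAt ℝ (clockHam s ψ) p := by
  unfold clockHam
  fun_prop

lemma contDiffOn_timeOp {U : Set ℝ} (hU : IsOpen U) (h0 : (0 : ℝ) ∉ U) {n : ℕ}
    (hf : ContDiffOn ℝ (n + 1 : ℕ) f U) : ContDiffOn ℝ n (timeOp s f) U := by
  have hp : ∀ x ∈ U, (x : ℂ) ≠ 0 := fun x hx =>
    Complex.ofReal_ne_zero.mpr (ne_of_mem_of_not_mem hx h0)
  have hcoe : ContDiffOn ℝ n (fun p : ℝ => (p : ℂ)) U := Complex.ofRealCLM.contDiff.contDiffOn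
  have hderiv : ContDiffOn ℝ n (deriv f) U := hf.deriv_of_isOpen hU (by norm_cast)
  have hfn : ContDiffOn ℝ n f U := hf.of_le (by norm_cast; omega)
  have h : ContDiffOn ℝ n (fun q => Complex.I * s *
      (deriv f q * (q : ℂ)⁻¹ - f q * (2 * (q : ℂ) ^ 2)⁻¹)) U :=
    contDiffOn_const.mul ((hderiv.mul (hcoe.inv hp)).sub
      (hfn.mul ((contDiffOn_const.mul (hcoe.pow 2)).inv fun x hx => by simpa using hp x hx)))
  exact h.congr fun q _ => by simp only [timeOp, div_eq_mul_inv]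

lemma contDiffOn_iterate_timeOp {U : Set ℝ} (hU : IsOpen U) (h0 : (0 : ℝ) ∉ U) {n k : ℕ}
    (hf : ContDiffOn ℝ (n + k : ℕ) f U) : ContDiffOn ℝ n ((timeOp s)^[k] f) U := by
  induction k generalizing f with
  | zero => simpa using hf
  | succ k ih =>
    rw [Function.iterate_succ_apply]
    exact ih (contDiffOn_timeOp hU h0 (by rwa [← add_assoc] at hf))

variable (s) in
lemma timeOp_clockHam_sub (hp : p ≠ 0) (hψ : DifferentiableAt ℝ ψ p) :
    timeOp s (clockHam s ψ) p - clockHam s (timeOp s ψ) p = Complex.I * s ^ 2 * ψ p := by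
  have hsq : HasDerivAt (fun q : ℝ => (q : ℂ) ^ 2) (2 * p) p := by
    simpa using (hasDerivAt_pow 2 p).ofReal_comp
  have hderiv : deriv (clockHam s ψ) p = (s * (2 * p) * ψ p + s * p ^ 2 * deriv ψ p) / 2 :=
    (((hsq.const_mul (s : ℂ)).mul hψ.hasDerivAt).div_const 2).deriv
  have hpc : (p : ℂ) ≠ 0 := Complex.ofReal_ne_zero.mpr hp
  simp only [timeOp, clockHam, hderiv]
  field_simp
  ring

variable (s) in
lemma differentiableAt_iterate_timeOp {n k : ℕ} (hψ : ContDiffOn ℝ n ψ {(0 : ℝ)}ᶜ) (hk : k < n)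
    (hp : p ≠ 0) : DifferentiableAt ℝ ((timeOp s)^[k] ψ) p := by
  have h : ContDiffOn ℝ (1 : ℕ) ((timeOp s)^[k] ψ) {(0 : ℝ)}ᶜ :=
    contDiffOn_iterate_timeOp isOpen_compl_singleton (by simp) (hψ.of_le (by norm_cast; omega))
  exact (h.differentiableOn one_ne_zero).differentiableAt
    (isOpen_compl_singleton.mem_nhds hp)

variable (s) in
lemma iterate_timeOp_clockHam_sub {n : ℕ} (hψ : ContDiffOn ℝ (n + 1 : ℕ) ψ {(0 : ℝ)}ᶜ)
    (hp : p ≠ 0) :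
    (timeOp s)^[n + 1] (clockHam s ψ) p - clockHam s ((timeOp s)^[n + 1] ψ) p
      = Complex.I * s ^ 2 * (n + 1 : ℕ) * (timeOp s)^[n] ψ p := by
  induction n generalizing p with
  | zero =>
    have hd : DifferentiableAt ℝ ψ p :=
      differentiableAt_iterate_timeOp s (k := 0) hψ zero_lt_one hp
    simpa using timeOp_clockHam_sub s hp hd
  | succ n ih =>
    have hψ' : ContDiffOn ℝ (n + 1 : ℕ) ψ {(0 : ℝ)}ᶜ := hψ.of_le (by norm_cast; omega)
    have hIH : (timeOp s)^[n + 1] (clockHam s ψ) =ᶠ[nhds p] fun q =>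
        clockHam s ((timeOp s)^[n + 1] ψ) q
          + Complex.I * s ^ 2 * (n + 1 : ℕ) * (timeOp s)^[n] ψ q := by
      filter_upwards [isOpen_compl_singleton.mem_nhds hp] with q hq
      exact eq_add_of_sub_eq' (ih hψ' hq)
    have hφ := differentiableAt_iterate_timeOp s (k := n + 1) hψ (by omega) hp
    have hT := timeOp_clockHam_sub s hp hφ
    rw [Function.iterate_succ_apply', timeOp_congr_of_eventuallyEq hIH,
      timeOp_add_const_mul _ (differentiableAt_clockHam hφ)
        (differentiableAt_iterate_timeOp s hψ (by omega) hp),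
      ← Function.iterate_succ_apply' (f := timeOp s) (n := n),
      Function.iterate_succ_apply' (f := timeOp s) (n := n + 1)]
    push_cast
    linear_combination hT

end

theorem timeOp_pow_clockHam_commutator_general
    (s : ℝ) (hs : s = 1 ∨ s = -1) (n : ℕ) (ψ : ℝ → ℂ)
    (hψ : ContDiffOn ℝ (n : ℕ∞) ψ {(0 : ℝ)}ᶜ) :
    (∀ p : ℝ, p ≠ 0 →
      (timeOp s)^[n] (clockHam s ψ) p - clockHam s ((timeOp s)^[n] ψ) p
        = Complex.I * (n : ℂ) * (timeOp s)^[n - 1] ψ p) ∧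
    (∀ ψ' : ℝ → ℂ, (∀ p : ℝ, p ≠ 0 → DifferentiableAt ℝ ψ' p) → ∀ p : ℝ, p ≠ 0 →
      timeOp s (clockHam s ψ') p - clockHam s (timeOp s ψ') p = Complex.I * ψ' p) := by
  have hs2 : (s : ℂ) ^ 2 = 1 := by rcases hs with rfl | rfl <;> norm_num
  refine ⟨fun p hp => ?_, fun ψ' hψ' p hp => ?_⟩
  · cases n with
    | zero => simp
    | succ n => simpa [hs2] using iterate_timeOp_clockHam_sub s hψ hp
  · simpa [hs2] using timeOp_clockHam_sub s hp (hψ' p hp)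

/-- The covariant time operator is canonically conjugate to the quadratic clock
Hamiltonian:  `[T̂ⁿ, Ĥ_C] = i·n·T̂ⁿ⁻¹` pointwise on `ℝ∖{0}`, and in particular
`[T̂, Ĥ_C] = i`. -/
theorem timeOp_pow_clockHam_commutator
    (s : ℝ) (hs : s = 1 ∨ s = -1) (n : ℕ) (hn : 1 ≤ n) (ψ : ℝ → ℂ)
    (hψ : ContDiffOn ℝ (n : ℕ∞) ψ {(0 : ℝ)}ᶜ) :
    (∀ p : ℝ, p ≠ 0 →
      (timeOp s)^[n] (clockHam s ψ) p - clockHam s ((timeOp s)^[n] ψ) p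
        = Complex.I * (n : ℂ) * (timeOp s)^[n - 1] ψ p) ∧
    (∀ ψ' : ℝ → ℂ, (∀ p : ℝ, p ≠ 0 → DifferentiableAt ℝ ψ' p) → ∀ p : ℝ, p ≠ 0 →
      timeOp s (clockHam s ψ') p - clockHam s (timeOp s ψ') p = Complex.I * ψ' p) :=
  timeOp_pow_clockHam_commutator_general s hs n ψ hψ
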